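/- Let a > 0, δ > 0, and let f ∈ C²([0, 1+δ]) be a solution of the profile equation on (0, 1+δ] with f(0) = a, f'(0) = 0, satisfying f(x) > 0, f'(x) < 0, f''(x) < 0 for all x ∈ (0, 1+δ]. Then (f(x) - x f'(x)) / √(1 + f'(x)²) ≥ a / √(1 + a²) for all x ∈ [0,1]. -/

import Mathlib

open Set

/-- `f ∈ C²(S)` solves the profile equation
`f''(x) = (1 + f'(x)²)[f'(x)(x - 1/x) - f(x)]` for `x ∈ S \ {0}`,
with initial data `f(0) = a`, `f'(0) = 0`. -/
def SolvesProfile (a : ℝ) (S : Set ℝ) (f : ℝ → ℝ) : Prop :=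
  ContDiffOn ℝ 2 f S ∧ f 0 = a ∧ derivWithin f S 0 = 0 ∧
  ∀ x ∈ S, x ≠ 0 →
    derivWithin (derivWithin f S) S x
      = (1 + (derivWithin f S x) ^ 2) * (derivWithin f S x * (x - 1 / x) - f x)

/-!
Since `f'' < 0`, `f` is concave on `[0, 1+δ]`, so its graph lies below each tangent line.
For `x ∈ [0, 1]` put `N = f(x) - x f'(x)` and `s = f'(x)`. The tangent at `x` evaluated at `0`
gives `N ≥ f(0) = a`, evaluated at `1` gives `N + s ≥ f(1) > 0`, and `s ≤ f'(0) = 0`; hence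
`s² ≤ N²`, and the claim follows because `t ↦ t / √(1 + t²)` is increasing on `[0, ∞)`.
-/

theorem concaveOn_of_contDiffOn_of_derivWithin_derivWithin_nonpos {D : Set ℝ} {f : ℝ → ℝ}
    (hD : Convex ℝ D) (hDu : UniqueDiffOn ℝ D) (hf : ContDiffOn ℝ 2 f D)
    (hf'' : ∀ x ∈ interior D, derivWithin (derivWithin f D) D x ≤ 0) : ConcaveOn ℝ D f := by
  have hf' : ContDiffOn ℝ 1 (derivWithin f D) D := hf.derivWithin hDu (by norm_num)
  refine concaveOn_of_hasDerivWithinAt2_nonpos (f' := derivWithin f D) hD hf.continuousOn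
    (fun x hx ↦ ?_) (fun x hx ↦ ?_) hf''
  · exact ((hf.differentiableOn (by norm_num) x (interior_subset hx)).hasDerivWithinAt).mono
      interior_subset
  · exact ((hf'.differentiableOn one_ne_zero x (interior_subset hx)).hasDerivWithinAt).mono
      interior_subset

theorem ConcaveOn.le_add_derivWithin_mul_sub {S : Set ℝ} {f : ℝ → ℝ} {x y : ℝ}
    (hfc : ConcaveOn ℝ S f) (hx : x ∈ S) (hy : y ∈ S) (hfd : DifferentiableWithinAt ℝ f S x) :
    f y ≤ f x + derivWithin f S x * (y - x) := by
  rcases lt_trichotomy y x with hyx | rfl | hxy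
  · have h := hfc.derivWithin_le_slope hy hx hyx hfd
    rw [slope_def_field, le_div_iff₀ (sub_pos.2 hyx)] at h
    linarith
  · simp
  · have h := hfc.slope_le_derivWithin hx hy hxy hfd
    rw [slope_def_field, div_le_iff₀ (sub_pos.2 hxy)] at h
    linarith

theorem div_sqrt_one_add_sq_le_div_sqrt_one_add_sq {a N s : ℝ} (ha : 0 ≤ a) (haN : a ≤ N)
    (hs : s ^ 2 ≤ N ^ 2) : a / √(1 + a ^ 2) ≤ N / √(1 + s ^ 2) := by
  have hN : 0 ≤ N := ha.trans haN
  rw [div_le_div_iff₀ (by positivity) (by positivity)]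
  calc a * √(1 + s ^ 2) = √(a ^ 2 * (1 + s ^ 2)) := by
        rw [Real.sqrt_mul (sq_nonneg a), Real.sqrt_sq ha]
    _ ≤ √(N ^ 2 * (1 + a ^ 2)) := Real.sqrt_le_sqrt (by nlinarith [pow_le_pow_left₀ ha haN 2])
    _ = N * √(1 + a ^ 2) := by rw [Real.sqrt_mul (sq_nonneg N), Real.sqrt_sq hN]

/-- If `f ∈ C²([0, 1+δ])` solves the profile equation with `f(0) = a > 0`, `f'(0) = 0`,
and `f > 0`, `f' < 0`, `f'' < 0` on `(0, 1+δ]`, then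
`(f(x) - x f'(x)) / √(1 + f'(x)²) ≥ a / √(1 + a²)` for all `x ∈ [0, 1]`. -/
theorem profile_transversality (a δ : ℝ) (ha : 0 < a) (hδ : 0 < δ)
    (f : ℝ → ℝ) (hf : SolvesProfile a (Icc 0 (1 + δ)) f)
    (hsigns : ∀ x ∈ Ioc (0:ℝ) (1 + δ),
      0 < f x ∧ derivWithin f (Icc 0 (1 + δ)) x < 0 ∧
      derivWithin (derivWithin f (Icc 0 (1 + δ))) (Icc 0 (1 + δ)) x < 0) :
    ∀ x ∈ Icc (0:ℝ) 1,
      (f x - x * derivWithin f (Icc 0 (1 + δ)) x)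
          / Real.sqrt (1 + (derivWithin f (Icc 0 (1 + δ)) x) ^ 2)
        ≥ a / Real.sqrt (1 + a ^ 2) := by
  intro x hx
  obtain ⟨hC2, hf0, hf'0, -⟩ := hf
  set S := Icc (0:ℝ) (1 + δ)
  have h0S : (0:ℝ) ∈ S := ⟨le_rfl, by linarith⟩
  have h1S : (1:ℝ) ∈ S := ⟨zero_le_one, by linarith⟩
  have hxS : x ∈ S := ⟨hx.1, by linarith [hx.2]⟩
  have hfd : DifferentiableOn ℝ f S := hC2.differentiableOn (by norm_num)
  have hconc : ConcaveOn ℝ S f := by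
    refine concaveOn_of_contDiffOn_of_derivWithin_derivWithin_nonpos (convex_Icc _ _)
      (uniqueDiffOn_Icc (by linarith)) hC2 fun y hy ↦ ?_
    rw [interior_Icc] at hy
    exact (hsigns y ⟨hy.1, hy.2.le⟩).2.2.le
  have hN : a ≤ f x - x * derivWithin f S x := by
    have := hconc.le_add_derivWithin_mul_sub hxS h0S (hfd x hxS)
    linarith
  have hNs : f 1 ≤ f x - x * derivWithin f S x + derivWithin f S x := by
    have := hconc.le_add_derivWithin_mul_sub hxS h1S (hfd x hxS)
    linarith
  have hs : derivWithin f S x ≤ 0 := hf'0 ▸ hconc.antitoneOn_derivWithin hfd h0S hxS hx.1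
  have hf1 : 0 < f 1 := (hsigns 1 ⟨one_pos, by linarith⟩).1
  exact div_sqrt_one_add_sq_le_div_sqrt_one_add_sq ha.le hN (sq_le_sq' (by linarith) (by linarith))
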